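/- arXiv:1811.08922 — 2 statements merged into one kernel-verified Lean document; each statement's English description precedes it below -/
import Mathlib

section
/- Let (M,d) be a compact locally geodesic metric space and m a locally doubling Borel probability measure on M. Let f_{1,∞} = (f_n)_{n∈ℕ} be a sequence of continuous maps f_n : M → M that is conformal with conformal factors φ_n, and assume there are k ∈ ℕ, α ∈ (0,1], ε > 0 and C > 0 such that |φ_n(x) − φ_n(y)| ≤ C·d(x,y)^α whenever d(x,y) < ε and n ≥ k. Then for every λ ∈ (0,1) there exist δ₀ ∈ (0,ε] and L > 0 such that every (δ,λ)-hyperbolic preball of order n for a point (k,x), with 0 < δ ≤ δ₀, is L-regular: m(B(x,R)) ≤ L·m(B(x,r)), where R is the radius of the smallest ball centered at x containing the preball and r the radius of the largest ball centered at x contained in it; the constant L does not depend on x or on the order n. -/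
open MeasureTheory Metric Set Filter

variable {M : Type*} [MetricSpace M]

/-- `iter f k n = f (k+n-1) ∘ ⋯ ∘ f (k+1) ∘ f k`, the `n`-fold composition along the
non-autonomous system `f_{1,∞}` (we index the sequence of maps by `ℕ` starting at `0`). -/
def iter (f : ℕ → M → M) (k : ℕ) : ℕ → M → M
  | 0 => id
  | n + 1 => f (k + n) ∘ iter f k n

/-- The topological support of a measure: points all of whose balls have positive measure. -/
def msupport [MeasurableSpace M] (m : Measure M) : Set M :=
  {x : M | ∀ r : ℝ, 0 < r → 0 < m (ball x r)}

/-- `m` is non-singular for the sequence `f`: images (in outer measure) and preimages of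
null measurable sets are null. -/
def NonSingular [MeasurableSpace M] (m : Measure M) (f : ℕ → M → M) : Prop :=
  ∀ n : ℕ, ∀ A : Set M, MeasurableSet A → m A = 0 →
    m (f n '' A) = 0 ∧ m (f n ⁻¹' A) = 0

/-- `A` is forward invariant for the sequence `f`. -/
def FwdInvariant (f : ℕ → M → M) (A : Set M) : Prop := ∀ n : ℕ, f n '' A ⊆ A

/-- `m` is locally ergodic for `f`. -/
def LocallyErgodic [MeasurableSpace M] (m : Measure M) (f : ℕ → M → M) : Prop :=
  ∀ A : Set M, MeasurableSet A → FwdInvariant f A → 0 < m A →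
    ∃ B : Set M, IsOpen B ∧ B.Nonempty ∧ m (B \ A) = 0

/-- `m` is locally strong ergodic for `f`. -/
def LocallyStrongErgodic [MeasurableSpace M] (m : Measure M) (f : ℕ → M → M) : Prop :=
  ∃ ε : ℝ, 0 < ε ∧ ∀ A : Set M, MeasurableSet A → FwdInvariant f A → 0 < m A →
    ∃ B : Set M, IsOpen B ∧ ENNReal.ofReal ε < m B ∧ m (B \ A) = 0

/-- Birkhoff sum `S_n ψ (k, x) = ∑_{i<n} ψ_{k+i}(f_k^i x)`. -/
def BirkhoffSum (f : ℕ → M → M) (ψ : ℕ → M → ℝ) (k : ℕ) (x : M) (n : ℕ) : ℝ :=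
  ∑ i ∈ Finset.range n, ψ (k + i) (iter f k i x)

/-- `V` is a `(δ, lam)`-hyperbolic preball of order `n` for the point `(k, x)`. -/
def IsHypPreball (f : ℕ → M → M) (δ lam : ℝ) (k : ℕ) (x : M) (n : ℕ) (V : Set M) : Prop :=
  x ∈ V ∧ IsOpen V ∧
  Set.BijOn (iter f k n) V (ball (iter f k n x) δ) ∧
  (∃ g : M → M, ContinuousOn g (ball (iter f k n x) δ) ∧
      Set.InvOn g (iter f k n) V (ball (iter f k n x) δ)) ∧
  ∀ y ∈ V, ∀ z ∈ V, ∀ i < n,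
    dist (iter f k i y) (iter f k i z) ≤ lam ^ (n - i) * dist (iter f k n y) (iter f k n z)

/-- The preball `V` (of order `n` at state `k`) has distortion bounded by `K`. -/
def BddDistortion [MeasurableSpace M] (m : Measure M) (f : ℕ → M → M)
    (k n : ℕ) (V : Set M) (K : ℝ) : Prop :=
  ∀ A B : Set M, MeasurableSet A → MeasurableSet B → A ⊆ V → B ⊆ V →
    m (iter f k n '' A) * m B ≤ ENNReal.ofReal K * (m A * m (iter f k n '' B))

/-- `V` is `L`-regular at `x`: the smallest ball around `x` containing `V` has measure at
most `L` times the measure of the largest ball around `x` contained in `V`. -/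
def RegularAt [MeasurableSpace M] (m : Measure M) (x : M) (V : Set M) (L : ℝ) : Prop :=
  m (ball x (sInf {s : ℝ | V ⊆ ball x s})) ≤
    ENNReal.ofReal L * m (ball x (sSup {s : ℝ | 0 ≤ s ∧ ball x s ⊆ V}))

/-- `(k, x)` has infinitely many `(δ, lam)`-hyperbolic preballs with bounded distortion. -/
def InfManyPreballsBD [MeasurableSpace M] (m : Measure M) (f : ℕ → M → M)
    (δ lam : ℝ) (k : ℕ) (x : M) : Prop :=
  ∃ K : ℝ, 0 < K ∧ ∀ N : ℕ, ∃ n ≥ N, ∃ V : Set M,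
    IsHypPreball f δ lam k x n V ∧ BddDistortion m f k n V K

/-- `(k, x)` has infinitely many regular `(δ, lam)`-hyperbolic preballs with bounded
distortion. -/
def InfManyRegPreballsBD [MeasurableSpace M] (m : Measure M) (f : ℕ → M → M)
    (δ lam : ℝ) (k : ℕ) (x : M) : Prop :=
  ∃ K : ℝ, 0 < K ∧ ∃ L : ℝ, 0 < L ∧ ∀ N : ℕ, ∃ n ≥ N, ∃ V : Set M,
    IsHypPreball f δ lam k x n V ∧ BddDistortion m f k n V K ∧ RegularAt m x V L

/-- `n` is a `σ`-hyperbolic time of `f` for `(k, x)` with Lipschitz data `φ`. -/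
def IsHypTime (f : ℕ → M → M) (φ : ℕ → M → ℝ) (σ : ℝ) (k : ℕ) (x : M) (n : ℕ) : Prop :=
  1 ≤ n ∧ ∀ ℓ : ℕ, 1 ≤ ℓ → ℓ ≤ n →
    ∏ i ∈ Finset.Ico (n - ℓ) n, φ (k + i) (iter f k i x) ≤ σ ^ ℓ

/-- `f` maps `U` homeomorphically onto `B`. -/
def MapsHomeoOnto (f : M → M) (U B : Set M) : Prop :=
  Set.BijOn f U B ∧ ContinuousOn f U ∧
  ∃ g : M → M, ContinuousOn g B ∧ Set.InvOn g f U B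

/-- The metric measure space satisfies the density point property. -/
def DensityPointProperty [MeasurableSpace M] (m : Measure M) : Prop :=
  ∀ A : Set M, MeasurableSet A → ∀ᵐ x ∂m, x ∈ A →
    Tendsto (fun r : ℝ => m (A ∩ ball x r) / m (ball x r))
      (nhdsWithin (0 : ℝ) (Set.Ioi 0)) (nhds 1)

/-- `m` is locally doubling. -/
def LocallyDoubling [MeasurableSpace M] (m : Measure M) : Prop :=
  ∃ ρ L₀ : ℝ, 0 < ρ ∧ 0 < L₀ ∧ ∀ x : M, ∀ r : ℝ, 0 < r → r ≤ ρ →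
    m (ball x (2 * r)) ≤ ENNReal.ofReal L₀ * m (ball x r)

/-- Any two points of `U` are joined by a rectifiable curve in `U` whose length equals
their distance. -/
def IsGeodesicIn (U : Set M) : Prop :=
  ∀ y ∈ U, ∀ z ∈ U, ∃ γ : ℝ → M, ContinuousOn γ (Set.Icc (0 : ℝ) 1) ∧
    Set.MapsTo γ (Set.Icc (0 : ℝ) 1) U ∧ γ 0 = y ∧ γ 1 = z ∧
    eVariationOn γ (Set.Icc (0 : ℝ) 1) = ENNReal.ofReal (dist y z)

/-- `(M, d)` is a locally geodesic metric space. -/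
def LocallyGeodesic (M : Type*) [MetricSpace M] : Prop :=
  ∀ x : M, ∃ U ∈ nhds x, IsGeodesicIn U

/-- The sequence `f` is conformal with conformal factors `φ`. -/
def ConformalSeq (f : ℕ → M → M) (φ : ℕ → M → ℝ) : Prop :=
  ∀ n : ℕ, ∀ x : M,
    Tendsto (fun y : M => dist (f n x) (f n y) / dist x y)
      (nhdsWithin x {x}ᶜ) (nhds (Real.exp (-(φ n x))))

/-- `m` is `f`-conformal with Jacobian functions `ψ`. -/
def ConformalMeasure [MeasurableSpace M] (m : Measure M) (f : ℕ → M → M)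
    (ψ : ℕ → M → ℝ) : Prop :=
  ∀ n : ℕ, ∀ A : Set M, MeasurableSet A → Set.InjOn (f n) A →
    m (f n '' A) = ∫⁻ x in A, ENNReal.ofReal (Real.exp (-(ψ n x))) ∂m

/-- `f` is a local homeomorphism. -/
def IsLocalHomeo (f : M → M) : Prop :=
  ∀ x : M, ∃ U : Set M, IsOpen U ∧ x ∈ U ∧ ∃ W : Set M, IsOpen W ∧ MapsHomeoOnto f U W

/-- The maps `f n` are local homeomorphisms with uniform Lipschitz constant `φ` for the
inverse branches. -/
def UnifLipInvBranches (f : ℕ → M → M) (φ : ℕ → M → ℝ) : Prop :=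
  ∀ k : ℕ, ∀ x : M, ∃ V : Set M, IsOpen V ∧ x ∈ V ∧
    (∃ W : Set M, IsOpen W ∧ MapsHomeoOnto (f k) V W) ∧
    ∀ y ∈ V, ∀ z ∈ V, dist y z ≤ φ k x * dist (f k y) (f k z)

section Aux
variable {M : Type*} [MetricSpace M]

lemma iter_cont {f : ℕ → M → M} (hf : ∀ n, Continuous (f n)) (k n : ℕ) :
    Continuous (iter f k n) := by
  induction n with
  | zero => exact continuous_id
  | succ n ih => exact (hf (k + n)).comp ih

lemma conf_local {f : ℕ → M → M} {φ : ℕ → M → ℝ} (hconf : ConformalSeq f φ)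
    (k : ℕ) : ∀ (n : ℕ) (z : M),
    (∀ K : ℝ, Real.exp (-(BirkhoffSum f φ k z n)) < K →
      ∃ r > 0, ∀ w, dist z w < r → dist (iter f k n z) (iter f k n w) ≤ K * dist z w)
    ∧ (∀ K : ℝ, 0 < K → K < Real.exp (-(BirkhoffSum f φ k z n)) →
      ∃ r > 0, ∀ w, dist z w < r → K * dist z w ≤ dist (iter f k n z) (iter f k n w)) := by
  intro n
  induction n with
  | zero =>
    intro z
    constructor
    · intro K hK
      refine ⟨1, one_pos, fun w _ => ?_⟩
      simp only [BirkhoffSum, Finset.range_zero, Finset.sum_empty, neg_zero, Real.exp_zero] at hK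
      simpa [iter] using le_mul_of_one_le_left dist_nonneg hK.le
    · intro K hK0 hK
      refine ⟨1, one_pos, fun w _ => ?_⟩
      simp only [BirkhoffSum, Finset.range_zero, Finset.sum_empty, neg_zero, Real.exp_zero] at hK
      simpa [iter] using mul_le_of_le_one_left dist_nonneg hK.le
  | succ n ih =>
    intro z
    set zn := iter f k n z with hzn
    have hS : BirkhoffSum f φ k z (n+1) = BirkhoffSum f φ k z n + φ (k + n) zn := by
      simp [BirkhoffSum, Finset.sum_range_succ, hzn]
    set a := Real.exp (-(BirkhoffSum f φ k z n)) with ha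
    set b := Real.exp (-(φ (k + n) zn)) with hb
    have ha0 : 0 < a := Real.exp_pos _
    have hb0 : 0 < b := Real.exp_pos _
    have hab : Real.exp (-(BirkhoffSum f φ k z (n+1))) = a * b := by
      rw [hS, neg_add, Real.exp_add]
    -- upper bound from conformality of f (k+n) at zn
    have hup : ∀ K₂ : ℝ, b < K₂ → ∃ r₂ > 0, ∀ w', dist zn w' < r₂ →
        dist (f (k + n) zn) (f (k + n) w') ≤ K₂ * dist zn w' := by
      intro K₂ hK₂
      have hev := (hconf (k + n) zn).eventually_lt_const hK₂
      rw [eventually_nhdsWithin_iff, Metric.eventually_nhds_iff] at hev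
      obtain ⟨r₂, hr₂, h⟩ := hev
      refine ⟨r₂, hr₂, fun w' hw' => ?_⟩
      rcases eq_or_ne w' zn with rfl | hne
      · simp
      · have := h (show dist w' zn < r₂ by rwa [dist_comm]) (by simpa using hne)
        have hd : 0 < dist zn w' := dist_pos.mpr (Ne.symm hne)
        calc dist (f (k + n) zn) (f (k + n) w')
            = dist (f (k + n) zn) (f (k + n) w') / dist zn w' * dist zn w' := by
              field_simp
          _ ≤ K₂ * dist zn w' := by
              apply mul_le_mul_of_nonneg_right this.le dist_nonneg
    have hlow : ∀ K₂ : ℝ, 0 < K₂ → K₂ < b → ∃ r₂ > 0, ∀ w', dist zn w' < r₂ →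
        K₂ * dist zn w' ≤ dist (f (k + n) zn) (f (k + n) w') := by
      intro K₂ hK₂0 hK₂
      have hev := (hconf (k + n) zn).eventually_const_lt hK₂
      rw [eventually_nhdsWithin_iff, Metric.eventually_nhds_iff] at hev
      obtain ⟨r₂, hr₂, h⟩ := hev
      refine ⟨r₂, hr₂, fun w' hw' => ?_⟩
      rcases eq_or_ne w' zn with rfl | hne
      · simp
      · have := h (show dist w' zn < r₂ by rwa [dist_comm]) (by simpa using hne)
        have hd : 0 < dist zn w' := dist_pos.mpr (Ne.symm hne)
        calc K₂ * dist zn w' ≤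
            dist (f (k + n) zn) (f (k + n) w') / dist zn w' * dist zn w' := by
              apply mul_le_mul_of_nonneg_right this.le dist_nonneg
          _ = dist (f (k + n) zn) (f (k + n) w') := by field_simp
    constructor
    · -- upper for n+1
      intro K hK
      rw [hab] at hK
      set t := Real.sqrt (K / (a * b)) with ht
      have habpos : 0 < a * b := mul_pos ha0 hb0
      have ht1 : 1 < t := by
        rw [ht]
        have : (1:ℝ) < K / (a * b) := (one_lt_div habpos).mpr hK
        calc (1:ℝ) = Real.sqrt 1 := by rw [Real.sqrt_one]
          _ < Real.sqrt (K / (a * b)) := Real.sqrt_lt_sqrt zero_le_one this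
      have ht0 : 0 < t := lt_trans one_pos ht1
      have htt : t * t = K / (a * b) := Real.mul_self_sqrt (div_nonneg (le_of_lt (habpos.trans hK)) habpos.le)
      have hKeq : (a * t) * (b * t) = K := by
        have : (a * t) * (b * t) = (a * b) * (t * t) := by ring
        rw [this, htt]; field_simp
      obtain ⟨r₁, hr₁, h₁⟩ := (ih z).1 (a * t) (by nlinarith)
      obtain ⟨r₂, hr₂, h₂⟩ := hup (b * t) (by nlinarith)
      refine ⟨min r₁ (r₂ / (a * t)), by positivity, fun w hw => ?_⟩
      have hw₁ : dist z w < r₁ := lt_of_lt_of_le hw (min_le_left _ _)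
      have h1 := h₁ w hw₁
      have hw₂ : dist zn (iter f k n w) < r₂ := by
        calc dist zn (iter f k n w) ≤ (a * t) * dist z w := h1
          _ < (a * t) * (r₂ / (a * t)) := by
              apply mul_lt_mul_of_pos_left _ (by positivity)
              exact lt_of_lt_of_le hw (min_le_right _ _)
          _ = r₂ := by field_simp
      have h2 := h₂ (iter f k n w) hw₂
      have : dist (iter f k (n+1) z) (iter f k (n+1) w)
          ≤ (b * t) * ((a * t) * dist z w) := by
        refine le_trans ?_ (mul_le_mul_of_nonneg_left h1 (by positivity))
        exact h2
      calc dist (iter f k (n+1) z) (iter f k (n+1) w) ≤ (b * t) * ((a * t) * dist z w) := this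
        _ = K * dist z w := by rw [← hKeq]; ring
    · -- lower for n+1
      intro K hK0 hK
      rw [hab] at hK
      set t := Real.sqrt ((a * b) / K) with ht
      have habpos : 0 < a * b := mul_pos ha0 hb0
      have ht1 : 1 < t := by
        rw [ht]
        have : (1:ℝ) < (a * b) / K := (one_lt_div hK0).mpr hK
        calc (1:ℝ) = Real.sqrt 1 := by rw [Real.sqrt_one]
          _ < _ := Real.sqrt_lt_sqrt zero_le_one this
      have ht0 : 0 < t := lt_trans one_pos ht1
      have htt : t * t = (a * b) / K := Real.mul_self_sqrt (by positivity)
      have hKeq : (a / t) * (b / t) = K := by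
        have h' : (a / t) * (b / t) = (a * b) / (t * t) := by ring
        rw [h', htt]; field_simp
      obtain ⟨r₁, hr₁, h₁⟩ := (ih z).2 (a / t) (by positivity) (by
        rw [div_lt_iff₀ ht0]; nlinarith)
      obtain ⟨r₂, hr₂, h₂⟩ := hlow (b / t) (by positivity) (by
        rw [div_lt_iff₀ ht0]; nlinarith)
      obtain ⟨r₃, hr₃, h₃⟩ := (ih z).1 (a + 1) (by nlinarith [Real.exp_pos (-(BirkhoffSum f φ k z n))])
      refine ⟨min (min r₁ r₃) (r₂ / (a + 1)), by positivity, fun w hw => ?_⟩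
      have hw₁ : dist z w < r₁ := lt_of_lt_of_le hw ((min_le_left _ _).trans (min_le_left _ _))
      have hw₃ : dist z w < r₃ := lt_of_lt_of_le hw ((min_le_left _ _).trans (min_le_right _ _))
      have hnear : dist zn (iter f k n w) < r₂ := by
        calc dist zn (iter f k n w) ≤ (a + 1) * dist z w := h₃ w hw₃
          _ < (a + 1) * (r₂ / (a + 1)) := by
              apply mul_lt_mul_of_pos_left _ (by positivity)
              exact lt_of_lt_of_le hw (min_le_right _ _)
          _ = r₂ := by field_simp
      calc K * dist z w = (b / t) * ((a / t) * dist z w) := by rw [← hKeq]; ring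
        _ ≤ (b / t) * dist zn (iter f k n w) :=
            mul_le_mul_of_nonneg_left (h₁ w hw₁) (by positivity)
        _ ≤ dist (iter f k (n+1) z) (iter f k (n+1) w) := h₂ (iter f k n w) hnear

end Aux
section Aux2
variable {M : Type*} [MetricSpace M]

lemma eVar_add {γ : ℝ → M} {a b c : ℝ} (hab : a ≤ b) (hbc : b ≤ c) :
    eVariationOn γ (Set.Icc a b) + eVariationOn γ (Set.Icc b c)
      = eVariationOn γ (Set.Icc a c) := by
  have := eVariationOn.Icc_add_Icc γ (s := Set.univ) hab hbc (Set.mem_univ b)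
  simpa [Set.univ_inter] using this

lemma curve_propagate {γ : ℝ → M} (hγ : ContinuousOn γ (Set.Icc 0 1))
    {F : M → M} (hFγ : ContinuousOn (F ∘ γ) (Set.Icc 0 1))
    {W : Set M} (hW0 : γ 0 ∈ W) {K : ℝ} (hK : 0 ≤ K)
    (hWopen : ∀ t ∈ Set.Icc (0:ℝ) 1, γ t ∈ W →
      ∀ᶠ t' in nhdsWithin t (Set.Icc (0:ℝ) 1), γ t' ∈ W)
    (hWlim : ∀ t ∈ Set.Icc (0:ℝ) 1, 0 < t →
      edist (F (γ 0)) (F (γ t)) ≤ ENNReal.ofReal K * eVariationOn γ (Set.Icc 0 t) →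
      (∀ s ∈ Set.Ico (0:ℝ) t, γ s ∈ W) → γ t ∈ W)
    (hloc : ∀ t ∈ Set.Icc (0:ℝ) 1, γ t ∈ W → ∃ r > 0, ∀ t' ∈ Set.Icc (0:ℝ) 1,
      dist (γ t) (γ t') < r → dist (F (γ t)) (F (γ t')) ≤ K * dist (γ t) (γ t')) :
    ∀ t ∈ Set.Icc (0:ℝ) 1, γ t ∈ W ∧
      edist (F (γ 0)) (F (γ t)) ≤ ENNReal.ofReal K * eVariationOn γ (Set.Icc 0 t) := by
  classical
  set P : ℝ → Prop := fun s => γ s ∈ W ∧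
    edist (F (γ 0)) (F (γ s)) ≤ ENNReal.ofReal K * eVariationOn γ (Set.Icc 0 s) with hP
  set A : Set ℝ := {t | t ∈ Set.Icc (0:ℝ) 1 ∧ ∀ s ∈ Set.Icc 0 t, P s} with hA
  have h0A : 0 ∈ A := by
    refine ⟨⟨le_refl _, zero_le_one⟩, fun s hs => ?_⟩
    have hs0 : s = 0 := le_antisymm hs.2 hs.1
    subst hs0
    exact ⟨hW0, by simp⟩
  have bddA : BddAbove A := ⟨1, fun t ht => ht.1.2⟩
  set T := sSup A with hTdef
  have hT0 : 0 ≤ T := le_csSup bddA h0A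
  have hT1 : T ≤ 1 := csSup_le ⟨0, h0A⟩ fun t ht => ht.1.2
  have hTmem : T ∈ Set.Icc (0:ℝ) 1 := ⟨hT0, hT1⟩
  have key1 : ∀ s, 0 ≤ s → s < T → P s := by
    intro s hs0 hsT
    obtain ⟨t, htA, hst⟩ := exists_lt_of_lt_csSup ⟨0, h0A⟩ hsT
    exact htA.2 s ⟨hs0, hst.le⟩
  have key2 : edist (F (γ 0)) (F (γ T)) ≤
      ENNReal.ofReal K * eVariationOn γ (Set.Icc 0 T) := by
    rcases eq_or_lt_of_le hT0 with h0T | h0T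
    · rw [← h0T]; simp
    · set u : ℕ → ℝ := fun j => T - T / (j + 1) with hu
      have humem : ∀ j, u j ∈ Set.Ico 0 T := by
        intro j
        constructor
        · have h1 : T / (j + 1) ≤ T / 1 := by
            apply div_le_div_of_nonneg_left hT0 one_pos
            exact_mod_cast Nat.le_add_left 1 j
          simp only [hu, div_one] at h1 ⊢
          linarith
        · have : 0 < T / (j + 1) := by positivity
          simp only [hu]; linarith
      have hulim : Filter.Tendsto u Filter.atTop (nhds T) := by
        have h1 : Filter.Tendsto (fun j : ℕ => T / (j + 1)) Filter.atTop (nhds 0) := by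
          apply Filter.Tendsto.div_atTop (tendsto_const_nhds)
          exact tendsto_natCast_atTop_atTop.atTop_add tendsto_const_nhds
        have := Filter.Tendsto.sub (tendsto_const_nhds (x := T) (f := Filter.atTop (α := ℕ))) h1
        simpa using this
      have hulim' : Filter.Tendsto u Filter.atTop (nhdsWithin T (Set.Icc 0 1)) := by
        apply tendsto_nhdsWithin_of_tendsto_nhds_of_eventually_within _ hulim
        exact Filter.Eventually.of_forall fun j =>
          ⟨(humem j).1, le_trans (humem j).2.le hT1⟩
      have hFlim : Filter.Tendsto (fun j => edist (F (γ 0)) (F (γ (u j)))) Filter.atTop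
          (nhds (edist (F (γ 0)) (F (γ T)))) := by
        apply Filter.Tendsto.edist tendsto_const_nhds
        exact (hFγ.continuousWithinAt hTmem).tendsto.comp hulim'
      apply le_of_tendsto hFlim
      apply Filter.Eventually.of_forall
      intro j
      have hPj := key1 (u j) (humem j).1 (humem j).2
      refine le_trans hPj.2 ?_
      apply mul_le_mul_right
      exact eVariationOn.mono γ (Set.Icc_subset_Icc le_rfl (humem j).2.le)
  have key2b : γ T ∈ W := by
    rcases eq_or_lt_of_le hT0 with h0T | h0T
    · rw [← h0T]; exact hW0
    · exact hWlim T hTmem h0T key2 fun s hs => (key1 s hs.1 hs.2).1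
  have key3 : ∀ s ∈ Set.Icc (0:ℝ) T, P s := by
    intro s hs
    rcases lt_or_eq_of_le hs.2 with h | h
    · exact key1 s hs.1 h
    · subst h; exact ⟨key2b, key2⟩
  have key4 : T = 1 := by
    by_contra hne
    have hTlt : T < 1 := lt_of_le_of_ne hT1 hne
    obtain ⟨r, hr, hlip⟩ := hloc T hTmem key2b
    have ev1 := hWopen T hTmem key2b
    have ev2 : ∀ᶠ t' in nhdsWithin T (Set.Icc (0:ℝ) 1), dist (γ T) (γ t') < r := by
      have := hγ.continuousWithinAt hTmem
      have := this.tendsto (Metric.ball_mem_nhds (γ T) hr)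
      filter_upwards [this] with t' ht'
      have : γ t' ∈ Metric.ball (γ T) r := ht'
      rw [Metric.mem_ball, dist_comm] at this
      exact this
    have ev := ev1.and ev2
    rw [eventually_nhdsWithin_iff, Metric.eventually_nhds_iff] at ev
    obtain ⟨d, hd, hprop⟩ := ev
    set t' := min 1 (T + d / 2) with ht'
    have hTt' : T < t' := lt_min hTlt (by linarith)
    have ht'mem : t' ∈ Set.Icc (0:ℝ) 1 := ⟨le_trans hT0 hTt'.le, min_le_left _ _⟩
    have ht'A : t' ∈ A := by
      refine ⟨ht'mem, fun s hs => ?_⟩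
      rcases le_or_gt s T with hsT | hsT
      · exact key3 s ⟨hs.1, hsT⟩
      · -- T < s ≤ t'
        have hsmem : s ∈ Set.Icc (0:ℝ) 1 := ⟨hs.1, le_trans hs.2 ht'mem.2⟩
        have hsd : dist s T < d := by
          rw [Real.dist_eq, abs_of_nonneg (by linarith)]
          have : s ≤ T + d / 2 := le_trans hs.2 (min_le_right _ _)
          linarith
        have hWs := hprop hsd hsmem
        have hlips := hlip s hsmem hWs.2
        have hed : edist (F (γ 0)) (F (γ s)) ≤
            ENNReal.ofReal K * eVariationOn γ (Set.Icc 0 T)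
              + ENNReal.ofReal K * eVariationOn γ (Set.Icc T s) := by
          calc edist (F (γ 0)) (F (γ s))
              ≤ edist (F (γ 0)) (F (γ T)) + edist (F (γ T)) (F (γ s)) := edist_triangle _ _ _
            _ ≤ ENNReal.ofReal K * eVariationOn γ (Set.Icc 0 T)
                + ENNReal.ofReal K * eVariationOn γ (Set.Icc T s) := by
                apply add_le_add key2
                calc edist (F (γ T)) (F (γ s)) = ENNReal.ofReal (dist (F (γ T)) (F (γ s))) :=
                      edist_dist _ _
                  _ ≤ ENNReal.ofReal (K * dist (γ T) (γ s)) := ENNReal.ofReal_le_ofReal hlips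
                  _ = ENNReal.ofReal K * ENNReal.ofReal (dist (γ T) (γ s)) :=
                      ENNReal.ofReal_mul hK
                  _ = ENNReal.ofReal K * edist (γ T) (γ s) := by rw [← edist_dist]
                  _ ≤ ENNReal.ofReal K * eVariationOn γ (Set.Icc T s) := by
                      apply mul_le_mul_right
                      exact eVariationOn.edist_le γ (Set.left_mem_Icc.mpr hsT.le)
                        (Set.right_mem_Icc.mpr hsT.le)
        refine ⟨hWs.1, ?_⟩
        calc edist (F (γ 0)) (F (γ s)) ≤ _ := hed
          _ = ENNReal.ofReal K *
              (eVariationOn γ (Set.Icc 0 T) + eVariationOn γ (Set.Icc T s)) := by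
              rw [mul_add]
          _ = ENNReal.ofReal K * eVariationOn γ (Set.Icc 0 s) := by
              rw [eVar_add hT0 hsT.le]
    exact absurd (le_csSup bddA ht'A) (not_le.mpr hTt')
  intro t ht
  exact key3 t ⟨ht.1, key4 ▸ ht.2⟩

end Aux2
section Aux3
variable {M : Type*} [MetricSpace M]

lemma geodesic_exists [CompactSpace M] (hgeo : LocallyGeodesic M) :
    ∃ r₀ > 0, ∀ p q : M, dist p q < r₀ → ∃ γ : ℝ → M, ContinuousOn γ (Set.Icc 0 1) ∧
      γ 0 = p ∧ γ 1 = q ∧ eVariationOn γ (Set.Icc 0 1) = ENNReal.ofReal (dist p q) := by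
  classical
  choose U hU hUgeo using hgeo
  have hcover : (Set.univ : Set M) ⊆ ⋃ x, interior (U x) := by
    intro x _
    exact Set.mem_iUnion.mpr ⟨x, mem_interior_iff_mem_nhds.mpr (hU x)⟩
  obtain ⟨r₀, hr₀, hleb⟩ := lebesgue_number_lemma_of_metric isCompact_univ
    (fun x => isOpen_interior) hcover
  refine ⟨r₀, hr₀, fun p q hpq => ?_⟩
  obtain ⟨i, hi⟩ := hleb p (Set.mem_univ p)
  have hp : p ∈ U i := interior_subset (hi (Metric.mem_ball_self hr₀))
  have hq : q ∈ U i := interior_subset (hi (by rwa [Metric.mem_ball, dist_comm]))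
  obtain ⟨γ, hγc, _, hγ0, hγ1, hγvar⟩ := hUgeo i p hp q hq
  exact ⟨γ, hγc, hγ0, hγ1, hγvar⟩

lemma doubling_iter [MeasurableSpace M] {m : Measure M} {ρ L₀ : ℝ}
    (hρ : 0 < ρ)
    (hdbl : ∀ x : M, ∀ r : ℝ, 0 < r → r ≤ ρ →
      m (ball x (2 * r)) ≤ ENNReal.ofReal L₀ * m (ball x r)) :
    ∀ (j : ℕ) (x : M) (r : ℝ), 0 < r → (∀ i : ℕ, i < j → 2 ^ i * r ≤ ρ) →
      m (ball x (2 ^ j * r)) ≤ (ENNReal.ofReal (max L₀ 1)) ^ j * m (ball x r) := by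
  intro j
  induction j with
  | zero => intro x r hr _; simp
  | succ j ih =>
    intro x r hr hrad
    have h1 : m (ball x (2 ^ (j+1) * r)) ≤ ENNReal.ofReal L₀ * m (ball x (2 ^ j * r)) := by
      have := hdbl x (2 ^ j * r) (by positivity) (hrad j (Nat.lt_succ_self j))
      calc m (ball x (2 ^ (j+1) * r)) = m (ball x (2 * (2 ^ j * r))) := by ring_nf
        _ ≤ ENNReal.ofReal L₀ * m (ball x (2 ^ j * r)) := this
    calc m (ball x (2 ^ (j+1) * r)) ≤ ENNReal.ofReal L₀ * m (ball x (2 ^ j * r)) := h1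
      _ ≤ ENNReal.ofReal (max L₀ 1) *
          ((ENNReal.ofReal (max L₀ 1)) ^ j * m (ball x r)) := by
          apply mul_le_mul' (ENNReal.ofReal_le_ofReal (le_max_left _ _))
          exact ih x r hr fun i hi => hrad i (hi.trans (Nat.lt_succ_self j))
      _ = (ENNReal.ofReal (max L₀ 1)) ^ (j+1) * m (ball x r) := by ring
end Aux3
section Aux4
variable {M : Type*} [MetricSpace M]

lemma geom_tail_le {q : ℝ} (hq0 : 0 ≤ q) (hq1 : q < 1) (n : ℕ) :
    ∑ i ∈ Finset.range n, q ^ (n - i) ≤ q / (1 - q) := by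
  have h1 : ∑ i ∈ Finset.range n, q ^ (n - i) = ∑ j ∈ Finset.range n, q ^ (j + 1) := by
    rw [← Finset.sum_range_reflect (fun j => q ^ (j + 1)) n]
    apply Finset.sum_congr rfl
    intro i hi
    rw [Finset.mem_range] at hi
    congr 1
    omega
  rw [h1]
  have h2 : ∑ j ∈ Finset.range n, q ^ (j + 1) = q * ∑ j ∈ Finset.range n, q ^ j := by
    rw [Finset.mul_sum]
    apply Finset.sum_congr rfl
    intro i _
    rw [pow_succ]
    ring
  rw [h2, div_eq_mul_one_div]
  apply mul_le_mul_of_nonneg_left _ hq0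
  have hne : q ≠ 1 := ne_of_lt hq1
  rw [geom_sum_eq hne]
  have e1 : q ^ n - 1 = -(1 - q ^ n) := by ring
  have e2 : q - 1 = -(1 - q) := by ring
  rw [e1, e2, neg_div_neg_eq, div_le_div_iff₀ (by linarith) (by linarith)]
  nlinarith [pow_nonneg hq0 n]

lemma distortion_sum {f : ℕ → M → M} {φ : ℕ → M → ℝ} {k n : ℕ} {lam δ α ε C : ℝ}
    (hα0 : 0 < α) (hl0 : 0 < lam) (hl1 : lam < 1) (hδ : 0 < δ) (hδε : δ ≤ ε)
    (hC : 0 < C) (hε : 0 < ε)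
    (hHolder : ∀ j ≥ k, ∀ x y : M, dist x y < ε → |φ j x - φ j y| ≤ C * dist x y ^ α)
    {x z : M}
    (hd : ∀ i < n, dist (iter f k i z) (iter f k i x) ≤
      lam ^ (n - i) * dist (iter f k n z) (iter f k n x))
    (hdn : dist (iter f k n z) (iter f k n x) < δ) :
    |BirkhoffSum f φ k z n - BirkhoffSum f φ k x n| ≤
      C * ε ^ α * (lam ^ α / (1 - lam ^ α)) := by
  have hq0 : (0:ℝ) < lam ^ α := Real.rpow_pos_of_pos hl0 α
  have hq1 : lam ^ α < 1 := Real.rpow_lt_one hl0.le hl1 hα0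
  have hpow : ∀ m : ℕ, ((lam ^ m : ℝ)) ^ α = (lam ^ α) ^ m := by
    intro m
    rw [← Real.rpow_natCast lam m, ← Real.rpow_natCast (lam ^ α) m,
      ← Real.rpow_mul hl0.le, ← Real.rpow_mul hl0.le, mul_comm]
  have hterm : ∀ i ∈ Finset.range n,
      |φ (k + i) (iter f k i z) - φ (k + i) (iter f k i x)| ≤
        C * ε ^ α * (lam ^ α) ^ (n - i) := by
    intro i hi
    rw [Finset.mem_range] at hi
    set di := dist (iter f k i z) (iter f k i x) with hdi
    have hdi0 : 0 ≤ di := dist_nonneg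
    have hdibound : di ≤ lam ^ (n - i) * δ := by
      refine le_trans (hd i hi) ?_
      apply mul_le_mul_of_nonneg_left hdn.le (pow_nonneg hl0.le _)
    have hlampow : lam ^ (n - i) ≤ 1 := pow_le_one₀ hl0.le hl1.le
    have hdiε : di < ε := by
      have hlt : lam ^ (n - i) < 1 := pow_lt_one₀ hl0.le hl1 (by omega)
      have : lam ^ (n - i) * δ < δ := by nlinarith
      linarith
    have h1 : |φ (k + i) (iter f k i z) - φ (k + i) (iter f k i x)| ≤ C * di ^ α :=
      hHolder (k + i) (Nat.le_add_right k i) _ _ hdiε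
    refine le_trans h1 ?_
    have h2 : di ^ α ≤ (lam ^ (n - i) * δ) ^ α :=
      Real.rpow_le_rpow hdi0 hdibound hα0.le
    have h3 : (lam ^ (n - i) * δ) ^ α = (lam ^ α) ^ (n - i) * δ ^ α := by
      rw [Real.mul_rpow (pow_nonneg hl0.le _) hδ.le, hpow]
    have h4 : δ ^ α ≤ ε ^ α := Real.rpow_le_rpow hδ.le hδε hα0.le
    calc C * di ^ α ≤ C * ((lam ^ α) ^ (n - i) * δ ^ α) := by
          rw [← h3]; exact mul_le_mul_of_nonneg_left h2 hC.le
      _ ≤ C * ((lam ^ α) ^ (n - i) * ε ^ α) := by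
          apply mul_le_mul_of_nonneg_left _ hC.le
          exact mul_le_mul_of_nonneg_left h4 (pow_nonneg hq0.le _)
      _ = C * ε ^ α * (lam ^ α) ^ (n - i) := by ring
  have hsum : |BirkhoffSum f φ k z n - BirkhoffSum f φ k x n| ≤
      ∑ i ∈ Finset.range n, |φ (k + i) (iter f k i z) - φ (k + i) (iter f k i x)| := by
    rw [BirkhoffSum, BirkhoffSum, ← Finset.sum_sub_distrib]
    exact Finset.abs_sum_le_sum_abs _ _
  refine le_trans hsum ?_
  refine le_trans (Finset.sum_le_sum hterm) ?_
  rw [← Finset.mul_sum]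
  rw [mul_le_mul_iff_right₀ (by positivity)]
  exact geom_tail_le hq0.le hq1 n

end Aux4
set_option maxHeartbeats 2000000
/-- on a compact locally geodesic space with a locally doubling measure,
hyperbolic preballs of a conformal sequence with locally Hölder conformal factors are
regular with a uniform constant. -/
theorem preballs_are_regular {M : Type*} [MetricSpace M] [CompactSpace M]
    [MeasurableSpace M] [BorelSpace M]
    (hgeo : LocallyGeodesic M)
    (m : Measure M) [IsProbabilityMeasure m] (hdb : LocallyDoubling m)
    (f : ℕ → M → M) (hf : ∀ n, Continuous (f n)) (φ : ℕ → M → ℝ)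
    (hconf : ConformalSeq f φ)
    (k : ℕ) (α ε C : ℝ) (hα0 : 0 < α) (hα1 : α ≤ 1) (hε : 0 < ε) (hC : 0 < C)
    (hHolder : ∀ n ≥ k, ∀ x y : M, dist x y < ε → |φ n x - φ n y| ≤ C * dist x y ^ α) :
    ∀ lam : ℝ, 0 < lam → lam < 1 →
      ∃ δ₀ : ℝ, 0 < δ₀ ∧ δ₀ ≤ ε ∧ ∃ L : ℝ, 0 < L ∧
        ∀ δ : ℝ, 0 < δ → δ ≤ δ₀ → ∀ (x : M) (n : ℕ), 1 ≤ n → ∀ V : Set M,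
          IsHypPreball f δ lam k x n V → RegularAt m x V L := by
  intro lam hl0 hl1
  by_cases hsub : ∀ p q : M, p = q
  · -- degenerate subsingleton case
    refine ⟨ε, hε, le_refl ε, 1, one_pos, ?_⟩
    intro δ hδ hδε x n hn V hpre
    have hball : {s : ℝ | V ⊆ ball x s} = Set.Ioi 0 := by
      ext s
      simp only [Set.mem_setOf_eq, Set.mem_Ioi]
      constructor
      · intro h
        by_contra hs
        push_neg at hs
        have hemp : ball x s = ∅ := ball_eq_empty.mpr hs
        have := h hpre.1
        rw [hemp] at this
        exact this
      · intro hs y hy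
        have : y = x := hsub y x
        rw [this]
        exact mem_ball_self hs
    rw [RegularAt, hball, csInf_Ioi]
    have : ball x (0:ℝ) = ∅ := ball_eq_empty.mpr le_rfl
    rw [this]
    simp
  -- main case
  push_neg at hsub
  obtain ⟨p, q, hpq⟩ := hsub
  have hdpq : 0 < dist p q := dist_pos.mpr hpq
  obtain ⟨ρ, L₀, hρ, hL₀, hdbl⟩ := hdb
  obtain ⟨r₀, hr₀, hgeod⟩ := geodesic_exists hgeo
  have hqα0 : 0 < lam ^ α := Real.rpow_pos_of_pos hl0 α
  have hqα1 : lam ^ α < 1 := Real.rpow_lt_one hl0.le hl1 hα0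
  set D := C * ε ^ α * (lam ^ α / (1 - lam ^ α)) with hD
  have hεα : 0 < ε ^ α := Real.rpow_pos_of_pos hε α
  have hD0 : 0 < D := by
    apply mul_pos (mul_pos hC hεα)
    apply div_pos hqα0
    linarith
  set E := Real.exp D with hEdef
  have hE1 : 1 < E := Real.one_lt_exp_iff.2 hD0
  have hE0 : 0 < E := lt_trans one_pos hE1
  set Lam := 8 * E ^ 2 with hLam
  have hLam1 : 1 ≤ Lam := by nlinarith
  obtain ⟨j, hj⟩ := pow_unbounded_of_one_lt (y := (2:ℝ)) Lam (by norm_num)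
  set δ₀ := min (min ε r₀) (min (ρ / 2 ^ j) (dist p q / 2)) with hδ₀def
  have hδ₀pos : 0 < δ₀ := by positivity
  refine ⟨δ₀, hδ₀pos, (min_le_left _ _).trans (min_le_left _ _),
    (max L₀ 1) ^ j, by positivity, ?_⟩
  intro δ hδ hδδ₀ x n hn V hpre
  obtain ⟨hxV, hVopen, hbij, ⟨g, hgc, hginv⟩, hcontr⟩ := hpre
  have hδε : δ ≤ ε := hδδ₀.trans ((min_le_left _ _).trans (min_le_left _ _))
  have hδr₀ : δ ≤ r₀ := hδδ₀.trans ((min_le_left _ _).trans (min_le_right _ _))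
  have hδρ : δ ≤ ρ / 2 ^ j := hδδ₀.trans ((min_le_right _ _).trans (min_le_left _ _))
  have hδpq : δ ≤ dist p q / 2 := hδδ₀.trans ((min_le_right _ _).trans (min_le_right _ _))
  set F := iter f k n with hFdef
  set c := F x with hcdef
  have hFc : Continuous F := iter_cont hf k n
  have himg : ∀ z ∈ V, F z ∈ ball c δ := hbij.mapsTo
  have hgV : ∀ u ∈ ball c δ, g u ∈ V := by
    intro u hu
    obtain ⟨v, hv, hvu⟩ := hbij.surjOn hu
    rw [← hvu, hginv.1 hv]
    exact hv
  have hgF : ∀ z ∈ V, g (F z) = z := fun z hz => hginv.1 hz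
  have hFg : ∀ u ∈ ball c δ, F (g u) = u := fun u hu => hginv.2 hu
  set Sx := BirkhoffSum f φ k x n with hSx
  set a := Real.exp (-Sx) with ha
  have ha0 : 0 < a := Real.exp_pos _
  have hdist : ∀ z ∈ V, |BirkhoffSum f φ k z n - Sx| ≤ D := by
    intro z hz
    apply distortion_sum hα0 hl0 hl1 hδ hδε hC hε hHolder
    · intro i hi
      exact hcontr z hz x hxV i hi
    · have := himg z hz
      rw [mem_ball] at this
      exact this
  have hexp_up : ∀ z ∈ V, Real.exp (-(BirkhoffSum f φ k z n)) ≤ a * E := by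
    intro z hz
    have h := abs_le.mp (hdist z hz)
    rw [ha, hEdef, ← Real.exp_add]
    apply Real.exp_le_exp.mpr
    linarith [h.1]
  have hexp_down : ∀ z ∈ V, a / E ≤ Real.exp (-(BirkhoffSum f φ k z n)) := by
    intro z hz
    have h := abs_le.mp (hdist z hz)
    rw [ha, hEdef, ← Real.exp_sub]
    apply Real.exp_le_exp.mpr
    linarith [h.2]
  set Kf := 2 * (a * E) with hKf
  set Kg := 2 * E / a with hKg
  have hKf0 : 0 < Kf := by positivity
  have hKg0 : 0 < Kg := by positivity
  have hlocup : ∀ z ∈ V, ∃ r > 0, ∀ w, dist z w < r →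
      dist (F z) (F w) ≤ Kf * dist z w := by
    intro z hz
    apply (conf_local hconf k n z).1
    have := hexp_up z hz
    nlinarith
  have hlocdown : ∀ z ∈ V, ∃ r > 0, ∀ w, dist z w < r →
      (a / (2 * E)) * dist z w ≤ dist (F z) (F w) := by
    intro z hz
    apply (conf_local hconf k n z).2 _ (by positivity)
    have := hexp_down z hz
    have h2 : a / (2 * E) < a / E := by
      apply div_lt_div_of_pos_left ha0 hE0
      linarith
    linarith
  -- OUTER bound
  have houter : ∀ y ∈ V, dist x y ≤ Kg * dist c (F y) := by
    intro y hy
    have hu : F y ∈ ball c δ := himg y hy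
    have hcu : dist c (F y) < δ := by rw [mem_ball, dist_comm] at hu; exact hu
    obtain ⟨γ, hγc, hγ0, hγ1, hγvar⟩ := hgeod c (F y) (lt_of_lt_of_le hcu hδr₀)
    have hγball : ∀ t ∈ Set.Icc (0:ℝ) 1, γ t ∈ ball c δ := by
      intro t ht
      have h1 : edist (γ 0) (γ t) ≤ eVariationOn γ (Set.Icc 0 1) :=
        eVariationOn.edist_le γ (Set.left_mem_Icc.mpr zero_le_one) ht
      rw [hγvar, hγ0, edist_dist] at h1
      have h2 : dist c (γ t) ≤ dist c (F y) :=
        (ENNReal.ofReal_le_ofReal_iff dist_nonneg).mp h1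
      rw [mem_ball, dist_comm]
      exact lt_of_le_of_lt h2 hcu
    have hcurve := curve_propagate (F := g) (W := (Set.univ : Set M)) (K := Kg) hγc
      (hgc.comp hγc fun t ht => hγball t ht)
      (Set.mem_univ _) hKg0.le
      (fun t ht _ => Filter.Eventually.of_forall fun _ => Set.mem_univ _)
      (fun t ht _ _ _ => Set.mem_univ _)
      ?_
    · have := (hcurve 1 (Set.right_mem_Icc.mpr zero_le_one)).2
      rw [hγvar, hγ0, hγ1] at this
      have heq : ENNReal.ofReal Kg * ENNReal.ofReal (dist c (F y))
          = ENNReal.ofReal (Kg * dist c (F y)) := (ENNReal.ofReal_mul hKg0.le).symm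
      rw [heq, edist_dist] at this
      have h3 : dist (g c) (g (F y)) ≤ Kg * dist c (F y) :=
        (ENNReal.ofReal_le_ofReal_iff (by positivity)).mp this
      rw [hcdef] at h3
      rw [hgF x hxV, hgF y hy] at h3
      exact h3
    · -- local inverse Lipschitz bound
      intro t ht _
      have hγtball : γ t ∈ ball c δ := hγball t ht
      have hz : g (γ t) ∈ V := hgV _ hγtball
      obtain ⟨r', hr', hlow⟩ := hlocdown _ hz
      have hcont : ContinuousAt g (γ t) := hgc.continuousAt (isOpen_ball.mem_nhds hγtball)
      obtain ⟨r'', hr'', hcont'⟩ := Metric.continuousAt_iff.mp hcont r' hr'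
      refine ⟨r'', hr'', fun t' ht' hdt => ?_⟩
      have hγt'ball : γ t' ∈ ball c δ := hγball t' ht'
      have hwz : dist (g (γ t)) (g (γ t')) < r' := by
        have := hcont' (show dist (γ t') (γ t) < r'' by rwa [dist_comm])
        rwa [dist_comm]
      have h1 := hlow (g (γ t')) hwz
      rw [hFg _ hγtball, hFg _ hγt'ball] at h1
      have h2 := mul_le_mul_of_nonneg_left h1 (le_of_lt (show (0:ℝ) < 2 * E / a by positivity))
      have h3 : (2 * E / a) * ((a / (2 * E)) * dist (g (γ t)) (g (γ t'))) =
          dist (g (γ t)) (g (γ t')) := by field_simp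
      rw [h3] at h2
      exact h2
  have houter' : ∀ y ∈ V, dist x y ≤ lam ^ n * dist c (F y) := by
    intro y hy
    have := hcontr x hxV y hy 0 (by omega)
    simpa [iter, hFdef, hcdef] using this
  -- INNER bound
  set rbar := min (δ / (2 * Kf)) (lam ^ n * δ) with hrbar
  have hlamn : (0:ℝ) < lam ^ n := pow_pos hl0 n
  have hrbar0 : 0 < rbar := lt_min (by positivity) (by positivity)
  have hlamn1 : lam ^ n ≤ 1 := pow_le_one₀ hl0.le hl1.le
  have hrbarδ : rbar ≤ δ := by
    refine (min_le_right _ _).trans ?_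
    nlinarith
  have hinner : ball x rbar ⊆ V := by
    intro y hy
    rw [mem_ball, dist_comm] at hy
    have hxy : dist x y < r₀ := lt_of_lt_of_le hy (hrbarδ.trans hδr₀)
    obtain ⟨γ, hγc, hγ0, hγ1, hγvar⟩ := hgeod x y hxy
    have hKfd : Kf * dist x y < δ / 2 := by
      have h1 : dist x y < δ / (2 * Kf) := lt_of_lt_of_le hy (min_le_left _ _)
      calc Kf * dist x y < Kf * (δ / (2 * Kf)) := by
            apply mul_lt_mul_of_pos_left h1 hKf0
        _ = δ / 2 := by field_simp
    have hcurve := curve_propagate (F := F) (W := V) (K := Kf) hγc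
      (hFc.comp_continuousOn hγc) (by rw [hγ0]; exact hxV) hKf0.le
      ?_ ?_ ?_
    · have := (hcurve 1 (Set.right_mem_Icc.mpr zero_le_one)).1
      rwa [hγ1] at this
    · -- openness of V along the curve
      intro t ht hVt
      have hcw : ContinuousWithinAt γ (Set.Icc 0 1) t := hγc.continuousWithinAt ht
      exact hcw.preimage_mem_nhdsWithin (hVopen.mem_nhds hVt)
    · -- limit membership
      intro t ht htpos hbound hbelow
      have hFγt : F (γ t) ∈ ball c δ := by
        have h1 : eVariationOn γ (Set.Icc 0 t) ≤ eVariationOn γ (Set.Icc 0 1) :=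
          eVariationOn.mono γ (Set.Icc_subset_Icc le_rfl ht.2)
        have h2 : edist (F (γ 0)) (F (γ t)) ≤ ENNReal.ofReal (Kf * dist x y) := by
          refine le_trans hbound ?_
          rw [ENNReal.ofReal_mul hKf0.le]
          apply mul_le_mul_right
          rw [← hγvar]
          exact h1
        rw [hγ0, edist_dist] at h2
        have h3 : dist c (F (γ t)) ≤ Kf * dist x y :=
          (ENNReal.ofReal_le_ofReal_iff (by positivity)).mp h2
        rw [mem_ball, dist_comm]
        linarith
      have hne : (nhdsWithin t (Set.Ico 0 t)).NeBot := by
        apply mem_closure_iff_nhdsWithin_neBot.mp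
        rw [closure_Ico (ne_of_lt htpos)]
        exact Set.right_mem_Icc.mpr htpos.le
      have h1 : Filter.Tendsto γ (nhdsWithin t (Set.Ico 0 t)) (nhds (γ t)) :=
        (hγc.continuousWithinAt ht).mono_left
          (nhdsWithin_mono t fun s hs => ⟨hs.1, le_trans hs.2.le ht.2⟩)
      have h2 : Filter.Tendsto (fun s => g (F (γ s))) (nhdsWithin t (Set.Ico 0 t))
          (nhds (g (F (γ t)))) := by
        have hgat : ContinuousAt g (F (γ t)) := hgc.continuousAt (isOpen_ball.mem_nhds hFγt)
        exact hgat.tendsto.comp ((hFc.tendsto _).comp h1)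
      have heq : ∀ᶠ s in nhdsWithin t (Set.Ico 0 t), γ s = g (F (γ s)) := by
        filter_upwards [self_mem_nhdsWithin] with s hs
        exact (hgF _ (hbelow s hs)).symm
      haveI := hne
      have hgeq : γ t = g (F (γ t)) := tendsto_nhds_unique (h1.congr' heq) h2
      rw [hgeq]
      exact hgV _ hFγt
    · -- local Lipschitz
      intro t ht hVt
      obtain ⟨r, hr, hup⟩ := hlocup _ hVt
      exact ⟨r, hr, fun t' _ hdt => hup (γ t') hdt⟩
  -- FINISH
  have hVsub : ∀ y ∈ V, dist y x < min (Kg * δ) (lam ^ n * δ) := by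
    intro y hy
    have h1 := houter y hy
    have h2 := houter' y hy
    have hcu : dist c (F y) < δ := by
      have := himg y hy; rw [mem_ball, dist_comm] at this; exact this
    rw [dist_comm]
    apply lt_min
    · calc dist x y ≤ Kg * dist c (F y) := h1
        _ < Kg * δ := by apply mul_lt_mul_of_pos_left hcu hKg0
    · calc dist x y ≤ lam ^ n * dist c (F y) := h2
        _ < lam ^ n * δ := by apply mul_lt_mul_of_pos_left hcu hlamn
  have hs₀mem : min (Kg * δ) (lam ^ n * δ) ∈ {s : ℝ | V ⊆ ball x s} := by
    intro y hy
    exact hVsub y hy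
  have hbddR : BddBelow {s : ℝ | V ⊆ ball x s} := by
    refine ⟨0, fun s hs => ?_⟩
    by_contra h
    push_neg at h
    have hemp : ball x s = ∅ := ball_eq_empty.mpr h.le
    have hx' := hs hxV
    rw [hemp] at hx'
    exact absurd hx' (Set.notMem_empty x)
  have hRle : sInf {s : ℝ | V ⊆ ball x s} ≤ min (Kg * δ) (lam ^ n * δ) :=
    csInf_le hbddR hs₀mem
  have hVδ₀ : V ⊆ ball x δ₀ := by
    intro y hy
    have := hVsub y hy
    rw [mem_ball]
    have h2 : lam ^ n * δ ≤ δ₀ := by nlinarith [hδδ₀]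
    exact lt_of_lt_of_le (lt_of_lt_of_le this (min_le_right _ _)) h2
  have hw : ∃ w : M, w ∉ ball x δ₀ := by
    by_contra h
    push_neg at h
    have h1 : dist p x < δ₀ := by have := h p; rwa [mem_ball] at this
    have h2 : dist q x < δ₀ := by have := h q; rwa [mem_ball] at this
    have := dist_triangle p x q
    rw [dist_comm x q] at this
    have hδ₀pq : δ₀ ≤ dist p q / 2 := (min_le_right _ _).trans (min_le_right _ _)
    linarith
  obtain ⟨w, hwout⟩ := hw
  have hbddr : BddAbove {s : ℝ | 0 ≤ s ∧ ball x s ⊆ V} := by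
    refine ⟨dist w x, fun s hs => ?_⟩
    by_contra h
    push_neg at h
    have hwin : w ∈ ball x s := by rw [mem_ball]; exact h
    exact hwout (hVδ₀ (hs.2 hwin))
  have hrmem : rbar ∈ {s : ℝ | 0 ≤ s ∧ ball x s ⊆ V} := ⟨hrbar0.le, hinner⟩
  have hrle : rbar ≤ sSup {s : ℝ | 0 ≤ s ∧ ball x s ⊆ V} := le_csSup hbddr hrmem
  -- chain of measures
  have hs₀Lam : min (Kg * δ) (lam ^ n * δ) ≤ Lam * rbar := by
    rcases le_total (δ / (2 * Kf)) (lam ^ n * δ) with h | h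
    · have hr : rbar = δ / (2 * Kf) := min_eq_left h
      have : Kg * δ = Lam * (δ / (2 * Kf)) := by
        rw [hKg, hLam, hKf]
        field_simp
        ring
      calc min (Kg * δ) (lam ^ n * δ) ≤ Kg * δ := min_le_left _ _
        _ = Lam * (δ / (2 * Kf)) := this
        _ = Lam * rbar := by rw [hr]
    · have hr : rbar = lam ^ n * δ := min_eq_right h
      calc min (Kg * δ) (lam ^ n * δ) ≤ lam ^ n * δ := min_le_right _ _
        _ = rbar := hr.symm
        _ ≤ Lam * rbar := by nlinarith
  have hmono1 : m (ball x (sInf {s : ℝ | V ⊆ ball x s})) ≤ m (ball x (2 ^ j * rbar)) := by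
    apply measure_mono
    apply ball_subset_ball
    calc sInf {s : ℝ | V ⊆ ball x s} ≤ min (Kg * δ) (lam ^ n * δ) := hRle
      _ ≤ Lam * rbar := hs₀Lam
      _ ≤ 2 ^ j * rbar := by nlinarith
  have hdouble : m (ball x (2 ^ j * rbar)) ≤
      (ENNReal.ofReal (max L₀ 1)) ^ j * m (ball x rbar) := by
    apply doubling_iter hρ hdbl j x rbar hrbar0
    intro i hi
    have h1 : rbar ≤ ρ / 2 ^ j := hrbarδ.trans hδρ
    have h2 : (2:ℝ) ^ i ≤ 2 ^ j := pow_le_pow_right₀ (by norm_num) hi.le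
    calc (2:ℝ) ^ i * rbar ≤ 2 ^ j * (ρ / 2 ^ j) := by
          apply mul_le_mul h2 h1 hrbar0.le (by positivity)
      _ = ρ := by field_simp
  have hmono2 : m (ball x rbar) ≤ m (ball x (sSup {s : ℝ | 0 ≤ s ∧ ball x s ⊆ V})) :=
    measure_mono (ball_subset_ball hrle)
  rw [RegularAt]
  have hofReal : ENNReal.ofReal ((max L₀ 1) ^ j) = (ENNReal.ofReal (max L₀ 1)) ^ j :=
    ENNReal.ofReal_pow (le_max_of_le_right zero_le_one) j
  rw [hofReal]
  calc m (ball x (sInf {s : ℝ | V ⊆ ball x s})) ≤ m (ball x (2 ^ j * rbar)) := hmono1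
    _ ≤ (ENNReal.ofReal (max L₀ 1)) ^ j * m (ball x rbar) := hdouble
    _ ≤ (ENNReal.ofReal (max L₀ 1)) ^ j *
        m (ball x (sSup {s : ℝ | 0 ≤ s ∧ ball x s ⊆ V})) := mul_le_mul_right hmono2 _
end

section
/- Let (M,d) be a compact metric space and f_{1,∞} = (f_n)_{n∈ℕ} a sequence of continuous maps f_n : M → M that is conformal with conformal factors φ_n, and assume there are k ∈ ℕ, α ∈ (0,1], ε > 0 and C > 0 such that |φ_n(x) − φ_n(y)| ≤ C·d(x,y)^α whenever d(x,y) < ε and n ≥ k. Let V be a (δ,λ)-hyperbolic preball of order n for a point (k,x), with 0 < 2δ ≤ ε and 0 < λ < 1, and assume that any two points of the closure of V are joined by a rectifiable curve contained in the closure of V whose length equals their distance, and likewise for the closed ball of radius δ centered at f_k^n(x). Then, with K = exp(C·(2δ)^α·(1−λ^α)^{−1}), for all y, z in the closure of V one has K^{−1}·e^{−S_nφ(k,x)}·d(y,z) ≤ d(f_k^n(y), f_k^n(z)) ≤ K·e^{−S_nφ(k,x)}·d(y,z), where S_nφ(k,x) = Σ_{i=0}^{n−1} φ_{k+i}(f_k^i(x)).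 -/
open MeasureTheory Metric Set Filter

variable {M : Type*} [MetricSpace M]

section AuxLemmas

variable {M : Type*} [MetricSpace M]

lemma iter_continuous (f : ℕ → M → M) (hf : ∀ n, Continuous (f n)) (k i : ℕ) :
    Continuous (iter f k i) := by
  induction i with
  | zero => exact continuous_id
  | succ i ih => exact (hf (k + i)).comp ih

lemma iter_add (f : ℕ → M → M) (k i j : ℕ) :
    iter f k (i + j) = iter f (k + i) j ∘ iter f k i := by
  induction j with
  | zero => rfl
  | succ j ih =>
      show f (k + (i + j)) ∘ iter f k (i + j) = (f (k + i + j) ∘ iter f (k + i) j) ∘ iter f k i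
      rw [ih, Nat.add_assoc]
      rfl

lemma eventually_nhdsWithin_of_diff {A : Set M} {x : M} {p : M → Prop}
    (h : ∀ᶠ y in nhdsWithin x (A \ {x}), p y) (hx : p x) :
    ∀ᶠ y in nhdsWithin x A, p y := by
  rw [Filter.eventually_iff, mem_nhdsWithin] at h ⊢
  obtain ⟨o, ho, hxo, hsub⟩ := h
  refine ⟨o, ho, hxo, fun w hw => ?_⟩
  by_cases hwx : w = x
  · exact hwx ▸ hx
  · exact hsub ⟨hw.1, hw.2, hwx⟩

/-- Local-to-global Lipschitz bound along a rectifiable curve. -/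
lemma key_global {γ : ℝ → M} {h : M → M} {κ L : ℝ} (hκ : 0 ≤ κ) (hL : 0 ≤ L)
    (hvar : eVariationOn γ (Set.Icc 0 1) = ENNReal.ofReal L)
    (hloc : ∀ u ∈ Set.Icc (0:ℝ) 1, ∀ η > 0, ∀ᶠ s in nhdsWithin u (Set.Icc (0:ℝ) 1),
      dist (h (γ s)) (h (γ u)) ≤ (κ + η) * dist (γ s) (γ u)) :
    dist (h (γ 0)) (h (γ 1)) ≤ κ * L := by
  have main : ∀ η > 0, dist (h (γ 0)) (h (γ 1)) ≤ (κ + η) * L := by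
    intro η hη
    have hκη : (0:ℝ) ≤ κ + η := by linarith
    set Var : ℝ → ENNReal := fun t => eVariationOn γ (Set.Icc 0 1 ∩ Set.Icc 0 t) with hVardef
    set A : Set ℝ := {t | t ∈ Set.Icc (0:ℝ) 1 ∧
      edist (h (γ 0)) (h (γ t)) ≤ ENNReal.ofReal (κ + η) * Var t} with hAdef
    have h0A : 0 ∈ A := by
      refine ⟨⟨le_rfl, zero_le_one⟩, ?_⟩
      simp [edist_self]
    have hAne : A.Nonempty := ⟨0, h0A⟩
    have hbdd : BddAbove A := ⟨1, fun t ht => ht.1.2⟩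
    -- the extension step
    have extend : ∀ t s : ℝ, t ∈ A → s ∈ Set.Icc (0:ℝ) 1 → t ≤ s →
        dist (h (γ s)) (h (γ t)) ≤ (κ + η) * dist (γ s) (γ t) → s ∈ A := by
      intro t s htA hs hts hest
      refine ⟨hs, ?_⟩
      have htIcc : t ∈ Set.Icc (0:ℝ) 1 := htA.1
      calc edist (h (γ 0)) (h (γ s))
          ≤ edist (h (γ 0)) (h (γ t)) + edist (h (γ t)) (h (γ s)) := edist_triangle _ _ _
        _ ≤ ENNReal.ofReal (κ + η) * Var t + ENNReal.ofReal ((κ + η) * dist (γ s) (γ t)) := by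
            refine add_le_add htA.2 ?_
            rw [edist_dist, dist_comm (h (γ t))]
            exact ENNReal.ofReal_le_ofReal hest
        _ = ENNReal.ofReal (κ + η) * Var t +
              ENNReal.ofReal (κ + η) * ENNReal.ofReal (dist (γ s) (γ t)) := by
            rw [ENNReal.ofReal_mul hκη]
        _ ≤ ENNReal.ofReal (κ + η) * Var t +
              ENNReal.ofReal (κ + η) * eVariationOn γ (Set.Icc 0 1 ∩ Set.Icc t s) := by
            gcongr
            rw [← edist_dist, edist_comm]
            exact eVariationOn.edist_le γ ⟨htIcc, le_rfl, hts⟩ ⟨hs, hts, le_rfl⟩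
        _ = ENNReal.ofReal (κ + η) *
              (eVariationOn γ (Set.Icc 0 1 ∩ Set.Icc 0 t) +
               eVariationOn γ (Set.Icc 0 1 ∩ Set.Icc t s)) := by rw [mul_add]
        _ = ENNReal.ofReal (κ + η) * Var s := by
            rw [eVariationOn.Icc_add_Icc γ htIcc.1 hts htIcc]
    set T := sSup A with hTdef
    have hT0 : 0 ≤ T := le_csSup hbdd h0A
    have hT1 : T ≤ 1 := csSup_le hAne fun t ht => ht.1.2
    obtain ⟨ρ, hρ, hball⟩ : ∃ ρ > 0, ∀ s ∈ Set.Icc (0:ℝ) 1, dist s T < ρ →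
        dist (h (γ s)) (h (γ T)) ≤ (κ + η) * dist (γ s) (γ T) := by
      have hev := hloc T ⟨hT0, hT1⟩ η hη
      obtain ⟨ρ, hρ, hsub⟩ := Metric.mem_nhdsWithin_iff.1 hev
      exact ⟨ρ, hρ, fun s hs hd => hsub ⟨Metric.mem_ball.2 hd, hs⟩⟩
    have hTA : T ∈ A := by
      obtain ⟨t, htA, htgt⟩ := exists_lt_of_lt_csSup hAne (show T - ρ < T by linarith)
      have htT : t ≤ T := le_csSup hbdd htA
      have hdist : dist t T < ρ := by
        rw [Real.dist_eq, abs_of_nonpos (by linarith)]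
        linarith
      have := hball t htA.1 hdist
      refine extend t T htA ⟨hT0, hT1⟩ htT ?_
      rw [dist_comm (h (γ T)), dist_comm (γ T)]
      exact this
    have hT1' : T = 1 := by
      by_contra hne
      have hTlt : T < 1 := lt_of_le_of_ne hT1 hne
      set s := min (T + ρ / 2) 1 with hsdef
      have hsIcc : s ∈ Set.Icc (0:ℝ) 1 := ⟨le_min (by linarith) zero_le_one, min_le_right _ _⟩
      have hTs : T < s := lt_min (by linarith) hTlt
      have hsd : dist s T < ρ := by
        rw [Real.dist_eq, abs_of_nonneg (by linarith)]
        have : s ≤ T + ρ / 2 := min_le_left _ _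
        linarith
      have hsA : s ∈ A := extend T s hTA hsIcc hTs.le (hball s hsIcc hsd)
      exact absurd (le_csSup hbdd hsA) (not_le.2 hTs)
    have hfin : edist (h (γ 0)) (h (γ 1)) ≤ ENNReal.ofReal ((κ + η) * L) := by
      have := hTA.2
      rw [hT1'] at this
      have hVar1 : Var 1 = ENNReal.ofReal L := by
        show eVariationOn γ (Set.Icc (0:ℝ) 1 ∩ Set.Icc 0 1) = _
        rw [Set.inter_self, hvar]
      rw [hVar1, ← ENNReal.ofReal_mul hκη] at this
      exact this
    rw [edist_dist] at hfin
    exact (ENNReal.ofReal_le_ofReal_iff (by positivity)).1 hfin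
  rcases eq_or_lt_of_le hL with hL0 | hLpos
  · have := main 1 one_pos
    rw [← hL0] at this ⊢
    simpa using this
  · refine le_of_forall_pos_le_add fun ε hε => ?_
    have := main (ε / L) (by positivity)
    calc dist (h (γ 0)) (h (γ 1)) ≤ (κ + ε / L) * L := this
      _ = κ * L + ε := by field_simp

/-- Chain rule for conformal factors along the composition, at a point of a set on which
all intermediate iterates are injective. -/
lemma chain_tendsto {f : ℕ → M → M} (hf : ∀ n, Continuous (f n))
    {φ : ℕ → M → ℝ} (hconf : ConformalSeq f φ) {U : Set M} {k : ℕ} {v : M} (hv : v ∈ U)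
    (n : ℕ) (hinj : ∀ i ≤ n, Set.InjOn (iter f k i) U) :
    Filter.Tendsto (fun v' => dist (iter f k n v) (iter f k n v') / dist v v')
      (nhdsWithin v (U \ {v})) (nhds (Real.exp (-(BirkhoffSum f φ k v n)))) := by
  induction n with
  | zero =>
      have h0 : BirkhoffSum f φ k v 0 = 0 := by simp [BirkhoffSum]
      rw [h0]
      have hev : (fun v' => dist (iter f k 0 v) (iter f k 0 v') / dist v v') =ᶠ[nhdsWithin v (U \ {v})]
          (fun _ => (1:ℝ)) := by
        filter_upwards [self_mem_nhdsWithin] with v' hv'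
        have hne : dist v v' ≠ 0 := by
          rw [dist_ne_zero]
          exact fun hc => hv'.2 (hc ▸ rfl)
        simp [iter, div_self hne]
      rw [show Real.exp (-(0:ℝ)) = 1 by simp]
      exact Filter.Tendsto.congr' hev.symm tendsto_const_nhds
  | succ n ih =>
      have ih' := ih (fun i hi => hinj i (hi.trans n.le_succ))
      have hFne : Set.MapsTo (iter f k n) (U \ {v}) ({iter f k n v}ᶜ) := by
        intro v' hv' hc
        exact hv'.2 (hinj n n.le_succ hv'.1 hv (by simpa using hc))
      have hbase : Filter.Tendsto (iter f k n) (nhdsWithin v (U \ {v}))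
          (nhdsWithin (iter f k n v) ({iter f k n v}ᶜ)) :=
        ((iter_continuous f hf k n).continuousAt.continuousWithinAt).tendsto_nhdsWithin hFne
      have h1 : Filter.Tendsto
          (fun v' => dist (f (k + n) (iter f k n v)) (f (k + n) (iter f k n v')) /
            dist (iter f k n v) (iter f k n v'))
          (nhdsWithin v (U \ {v})) (nhds (Real.exp (-(φ (k + n) (iter f k n v))))) :=
        (hconf (k + n) (iter f k n v)).comp hbase
      have hmul := h1.mul ih'
      have hBS : BirkhoffSum f φ k v (n + 1) =
          BirkhoffSum f φ k v n + φ (k + n) (iter f k n v) := Finset.sum_range_succ _ _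
      have hexp : Real.exp (-(φ (k + n) (iter f k n v))) * Real.exp (-(BirkhoffSum f φ k v n)) =
          Real.exp (-(BirkhoffSum f φ k v (n + 1))) := by
        rw [hBS, neg_add, Real.exp_add]
        ring
      rw [← hexp]
      refine Filter.Tendsto.congr' ?_ hmul
      filter_upwards [self_mem_nhdsWithin] with v' hv'
      have hne : dist (iter f k n v) (iter f k n v') ≠ 0 := by
        rw [dist_ne_zero]
        exact fun hc => hFne hv' (by simpa using hc.symm)
      show dist (f (k + n) (iter f k n v)) (f (k + n) (iter f k n v')) /
            dist (iter f k n v) (iter f k n v') *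
            (dist (iter f k n v) (iter f k n v') / dist v v') =
          dist (iter f k (n + 1) v) (iter f k (n + 1) v') / dist v v'
      rw [div_mul_div_comm,
        mul_comm (dist (f (k + n) (iter f k n v)) (f (k + n) (iter f k n v'))),
        mul_div_mul_left _ _ hne]
      rfl

/-- In a space where the closed ball is geodesic, the closed ball is contained in the
closure of the open ball. -/
lemma closedBall_subset_closure_ball {c : M} {δ : ℝ} (hδ : 0 < δ)
    (hgeo : IsGeodesicIn (Metric.closedBall c δ)) :
    Metric.closedBall c δ ⊆ closure (Metric.ball c δ) := by
  intro w hw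
  rcases lt_or_eq_of_le (show dist c w ≤ δ by rwa [dist_comm, ← Metric.mem_closedBall]) with hd | hd
  · exact subset_closure (by rwa [Metric.mem_ball, dist_comm])
  obtain ⟨γ, hγc, hγm, hγ0, hγ1, hγv⟩ := hgeo c (Metric.mem_closedBall_self hδ.le) w hw
  rw [Metric.mem_closure_iff]
  intro r hr
  set r' := min r δ with hr'def
  have hr'r : r' ≤ r := min_le_left _ _
  have hr'δ : r' ≤ δ := min_le_right _ _
  have hr'0 : 0 < r' := lt_min hr hδ
  set s := {t | t ∈ Set.Icc (0:ℝ) 1 ∧ r' / 2 ≤ dist (γ t) w} with hsdef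
  have h0s : 0 ∈ s := by
    refine ⟨⟨le_rfl, zero_le_one⟩, ?_⟩
    rw [hγ0, hd]
    linarith
  have hscl : IsClosed s := by
    have hcont : ContinuousOn (fun t => dist (γ t) w) (Set.Icc (0:ℝ) 1) :=
      (continuous_id.dist continuous_const).comp_continuousOn hγc
    exact hcont.preimage_isClosed_of_isClosed isClosed_Icc isClosed_Ici
  have hscompact : IsCompact s := isCompact_Icc.of_isClosed_subset hscl fun t ht => ht.1
  set σ := sSup s with hσdef
  have hσs : σ ∈ s := hscompact.sSup_mem ⟨0, h0s⟩
  have hσIcc : σ ∈ Set.Icc (0:ℝ) 1 := hσs.1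
  have hσw : r' / 2 ≤ dist (γ σ) w := hσs.2
  have hσ1 : σ < 1 := by
    rcases lt_or_eq_of_le hσIcc.2 with h | h
    · exact h
    · rw [h, hγ1, dist_self] at hσw; linarith
  obtain ⟨ρ, hρ, hcl⟩ : ∃ ρ > 0, ∀ t ∈ Set.Icc (0:ℝ) 1, dist t σ < ρ →
      dist (γ t) (γ σ) < r' / 4 := by
    have hcwa := hγc σ hσIcc
    rw [Metric.continuousWithinAt_iff] at hcwa
    obtain ⟨ρ, hρ, hsub⟩ := hcwa (r' / 4) (by linarith)
    exact ⟨ρ, hρ, fun t ht hd' => hsub ht hd'⟩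
  set t := min (σ + ρ / 2) 1 with htdef
  have htIcc : t ∈ Set.Icc (0:ℝ) 1 :=
    ⟨le_min (by linarith [hσIcc.1]) zero_le_one, min_le_right _ _⟩
  have hσt : σ < t := lt_min (by linarith) hσ1
  have htd : dist t σ < ρ := by
    rw [Real.dist_eq, abs_of_nonneg (by linarith)]
    have := min_le_left (σ + ρ / 2) 1
    linarith
  have hclose : dist (γ t) (γ σ) < r' / 4 := hcl t htIcc htd
  have hsbdd : BddAbove s := ⟨1, fun u hu => hu.1.2⟩
  have hts : t ∉ s := fun hc => absurd (le_csSup hsbdd hc) (not_le.2 hσt)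
  have htw : dist (γ t) w < r' / 2 := by
    by_contra hc
    exact hts ⟨htIcc, not_lt.1 hc⟩
  have htw0 : 0 < dist (γ t) w := by
    have htri := dist_triangle (γ σ) (γ t) w
    rw [dist_comm (γ σ) (γ t)] at htri
    linarith
  have hgeod : dist c (γ t) + dist (γ t) w ≤ δ := by
    have h1 : edist (γ 0) (γ t) ≤ eVariationOn γ (Set.Icc 0 1 ∩ Set.Icc 0 t) :=
      eVariationOn.edist_le γ ⟨⟨le_rfl, zero_le_one⟩, le_rfl, htIcc.1⟩ ⟨htIcc, htIcc.1, le_rfl⟩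
    have h2 : edist (γ t) (γ 1) ≤ eVariationOn γ (Set.Icc 0 1 ∩ Set.Icc t 1) :=
      eVariationOn.edist_le γ ⟨htIcc, le_rfl, htIcc.2⟩ ⟨⟨zero_le_one, le_rfl⟩, htIcc.2, le_rfl⟩
    have h3 := eVariationOn.Icc_add_Icc γ htIcc.1 htIcc.2 htIcc
    have h4 : edist (γ 0) (γ t) + edist (γ t) (γ 1) ≤
        eVariationOn γ (Set.Icc (0:ℝ) 1 ∩ Set.Icc 0 1) := by
      rw [← h3]; exact add_le_add h1 h2
    rw [Set.inter_self, hγv, hγ0, hγ1, edist_dist, edist_dist,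
      ← ENNReal.ofReal_add dist_nonneg dist_nonneg] at h4
    have h5 := (ENNReal.ofReal_le_ofReal_iff dist_nonneg).1 h4
    rw [hd] at h5
    linarith
  refine ⟨γ t, ?_, ?_⟩
  · rw [Metric.mem_ball, dist_comm]
    linarith
  · rw [dist_comm]
    linarith

end AuxLemmas

/-- the bi-Lipschitz estimate with constant
`K = exp(C (2δ)^α (1 - lam^α)⁻¹)` on the closure of a hyperbolic preball of a conformal
sequence with locally Hölder conformal factors, under geodesicity of the closure of the
preball and of the target closed ball. -/
theorem conformal_biLipschitz_on_preball {M : Type*} [MetricSpace M] [CompactSpace M]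
    (f : ℕ → M → M) (hf : ∀ n, Continuous (f n)) (φ : ℕ → M → ℝ)
    (hconf : ConformalSeq f φ)
    (k : ℕ) (α ε C : ℝ) (hα0 : 0 < α) (hα1 : α ≤ 1) (hε : 0 < ε) (hC : 0 < C)
    (hHolder : ∀ n ≥ k, ∀ x y : M, dist x y < ε → |φ n x - φ n y| ≤ C * dist x y ^ α)
    (δ lam : ℝ) (hδ : 0 < δ) (h2δ : 2 * δ ≤ ε) (hlam0 : 0 < lam) (hlam1 : lam < 1)
    (x : M) (n : ℕ) (hn : 1 ≤ n) (V : Set M) (hV : IsHypPreball f δ lam k x n V)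
    (hgeoV : IsGeodesicIn (closure V))
    (hgeoB : IsGeodesicIn (closedBall (iter f k n x) δ)) :
    ∀ y ∈ closure V, ∀ z ∈ closure V,
      (Real.exp (C * (2 * δ) ^ α * (1 - lam ^ α)⁻¹))⁻¹ *
          Real.exp (-(BirkhoffSum f φ k x n)) * dist y z ≤
        dist (iter f k n y) (iter f k n z) ∧
      dist (iter f k n y) (iter f k n z) ≤
        Real.exp (C * (2 * δ) ^ α * (1 - lam ^ α)⁻¹) *
          Real.exp (-(BirkhoffSum f φ k x n)) * dist y z := by
  classical
  obtain ⟨hxV, hVopen, hbij, ⟨g, hgc, hginv⟩, hhyp⟩ := hV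
  have hn0 : 0 < n := hn
  have hFcont : Continuous (iter f k n) := iter_continuous f hf k n
  have hμ0 : 0 < lam ^ α := Real.rpow_pos_of_pos hlam0 α
  have hμ1 : lam ^ α < 1 := Real.rpow_lt_one hlam0.le hlam1 hα0
  set S := BirkhoffSum f φ k x n with hSdef
  set D := C * (2 * δ) ^ α * (1 - lam ^ α)⁻¹ with hDdef
  have hD0 : 0 ≤ D := by
    apply mul_nonneg (mul_nonneg hC.le (Real.rpow_nonneg (by linarith) _))
    rw [inv_nonneg]
    linarith
  -- hyperbolic estimates extend to the closure
  have hcl_est : ∀ i, i < n → ∀ v ∈ closure V, ∀ v' ∈ closure V,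
      dist (iter f k i v) (iter f k i v') ≤
        lam ^ (n - i) * dist (iter f k n v) (iter f k n v') := by
    intro i hi v hv v' hv'
    have hclosed : IsClosed {p : M × M | dist (iter f k i p.1) (iter f k i p.2) ≤
        lam ^ (n - i) * dist (iter f k n p.1) (iter f k n p.2)} := by
      apply isClosed_le
      · exact ((iter_continuous f hf k i).comp continuous_fst).dist
          ((iter_continuous f hf k i).comp continuous_snd)
      · exact continuous_const.mul (((iter_continuous f hf k n).comp continuous_fst).dist
          ((iter_continuous f hf k n).comp continuous_snd))
    have hsub : closure V ×ˢ closure V ⊆ {p : M × M | dist (iter f k i p.1) (iter f k i p.2) ≤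
        lam ^ (n - i) * dist (iter f k n p.1) (iter f k n p.2)} := by
      rw [← closure_prod_eq]
      apply closure_minimal ?_ hclosed
      rintro ⟨a, b⟩ ⟨ha, hb⟩
      exact hhyp a ha b hb i hi
    exact hsub (Set.mk_mem_prod hv hv')
  have hlow : ∀ v ∈ closure V, ∀ v' ∈ closure V,
      dist v v' ≤ lam ^ n * dist (iter f k n v) (iter f k n v') := by
    intro v hv v' hv'
    have := hcl_est 0 hn0 v hv v' hv'
    simpa [iter] using this
  have hinjF : ∀ v ∈ closure V, ∀ v' ∈ closure V,
      iter f k n v = iter f k n v' → v = v' := by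
    intro v hv v' hv' he
    have := hlow v hv v' hv'
    rw [he, dist_self, mul_zero] at this
    exact dist_le_zero.1 this
  have hinj : ∀ i ≤ n, Set.InjOn (iter f k i) (closure V) := by
    intro i hi v hv v' hv' he
    apply hinjF v hv v' hv'
    have hcomp : iter f k n = iter f (k + i) (n - i) ∘ iter f k i := by
      have h1 := iter_add f k i (n - i)
      rwa [Nat.add_sub_cancel' hi] at h1
    rw [hcomp]
    show iter f (k + i) (n - i) (iter f k i v) = iter f (k + i) (n - i) (iter f k i v')
    exact congrArg _ he
  have hmaps : Set.MapsTo (iter f k n) (closure V) (closedBall (iter f k n x) δ) := by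
    intro v hv
    have h1 : iter f k n v ∈ closure (iter f k n '' V) :=
      image_closure_subset_closure_image hFcont ⟨v, hv, rfl⟩
    rw [hbij.image_eq] at h1
    exact Metric.closure_ball_subset_closedBall h1
  -- the Birkhoff sums vary by at most D on the closure
  have hpow : ∀ m : ℕ, ((lam ^ m : ℝ)) ^ α = (lam ^ α) ^ m := by
    intro m
    rw [← Real.rpow_natCast lam m, ← Real.rpow_natCast (lam ^ α) m,
      ← Real.rpow_mul hlam0.le, ← Real.rpow_mul hlam0.le, mul_comm]
  have hgeom : ∑ i ∈ Finset.range n, (lam ^ α) ^ (n - i) ≤ (1 - lam ^ α)⁻¹ := by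
    have hr := Finset.sum_range_reflect (fun j => (lam ^ α) ^ (j + 1)) n
    have h1 : ∑ i ∈ Finset.range n, (lam ^ α) ^ (n - i)
        = ∑ i ∈ Finset.range n, (lam ^ α) ^ (i + 1) := by
      rw [← hr]
      refine Finset.sum_congr rfl fun i hi => ?_
      rw [Finset.mem_range] at hi
      show (lam ^ α) ^ (n - i) = (lam ^ α) ^ ((n - 1 - i) + 1)
      congr 1
      omega
    rw [h1]
    have h2 : ∑ i ∈ Finset.range n, (lam ^ α) ^ (i + 1) ≤ ∑ i ∈ Finset.range n, (lam ^ α) ^ i :=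
      Finset.sum_le_sum fun i _ => pow_le_pow_of_le_one hμ0.le hμ1.le (Nat.le_succ i)
    have h3 : ∑ i ∈ Finset.range n, (lam ^ α) ^ i ≤ (1 - lam ^ α)⁻¹ := by
      rw [inv_eq_one_div, le_div_iff₀ (by linarith)]
      have h4 := geom_sum_mul (lam ^ α) n
      nlinarith [pow_nonneg hμ0.le n]
    linarith
  have hS_est : ∀ v ∈ closure V, |BirkhoffSum f φ k v n - S| ≤ D := by
    intro v hv
    have hxcl : x ∈ closure V := subset_closure hxV
    have hterm : ∀ i ∈ Finset.range n, |φ (k + i) (iter f k i v) - φ (k + i) (iter f k i x)| ≤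
        C * (2 * δ) ^ α * (lam ^ α) ^ (n - i) := by
      intro i hi
      rw [Finset.mem_range] at hi
      have hd1 := hcl_est i hi v hv x hxcl
      have hd2 : dist (iter f k n v) (iter f k n x) ≤ δ := by
        have := hmaps hv
        rwa [Metric.mem_closedBall] at this
      have hlam_le : lam ^ (n - i) ≤ 1 := pow_le_one₀ hlam0.le hlam1.le
      have hlam_nn : (0:ℝ) ≤ lam ^ (n - i) := pow_nonneg hlam0.le _
      have hd3 : dist (iter f k i v) (iter f k i x) ≤ lam ^ (n - i) * δ :=
        hd1.trans (by nlinarith)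
      have hd4 : dist (iter f k i v) (iter f k i x) < ε := by nlinarith
      have hH := hHolder (k + i) (Nat.le_add_right k i) _ _ hd4
      refine hH.trans ?_
      have h5 : dist (iter f k i v) (iter f k i x) ^ α ≤ (lam ^ (n - i) * δ) ^ α :=
        Real.rpow_le_rpow dist_nonneg hd3 hα0.le
      have h6 : ((lam ^ (n - i) * δ):ℝ) ^ α = (lam ^ α) ^ (n - i) * δ ^ α := by
        rw [Real.mul_rpow hlam_nn hδ.le, hpow]
      have h7 : (δ:ℝ) ^ α ≤ (2 * δ) ^ α := Real.rpow_le_rpow hδ.le (by linarith) hα0.le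
      have h8 : (0:ℝ) ≤ (lam ^ α) ^ (n - i) := pow_nonneg hμ0.le _
      calc C * dist (iter f k i v) (iter f k i x) ^ α
          ≤ C * ((lam ^ α) ^ (n - i) * δ ^ α) := by
            rw [← h6]
            exact mul_le_mul_of_nonneg_left h5 hC.le
        _ ≤ C * ((lam ^ α) ^ (n - i) * (2 * δ) ^ α) :=
            mul_le_mul_of_nonneg_left (mul_le_mul_of_nonneg_left h7 h8) hC.le
        _ = C * (2 * δ) ^ α * (lam ^ α) ^ (n - i) := by ring
    calc |BirkhoffSum f φ k v n - S|
        = |∑ i ∈ Finset.range n, (φ (k + i) (iter f k i v) - φ (k + i) (iter f k i x))| := by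
          rw [hSdef, BirkhoffSum, BirkhoffSum, ← Finset.sum_sub_distrib]
      _ ≤ ∑ i ∈ Finset.range n, |φ (k + i) (iter f k i v) - φ (k + i) (iter f k i x)| :=
          Finset.abs_sum_le_sum_abs _ _
      _ ≤ ∑ i ∈ Finset.range n, C * (2 * δ) ^ α * (lam ^ α) ^ (n - i) :=
          Finset.sum_le_sum hterm
      _ = C * (2 * δ) ^ α * ∑ i ∈ Finset.range n, (lam ^ α) ^ (n - i) := by
          rw [← Finset.mul_sum]
      _ ≤ D := by
          rw [hDdef]
          exact mul_le_mul_of_nonneg_left hgeom (by positivity)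
  have hchain : ∀ v ∈ closure V,
      Filter.Tendsto (fun v' => dist (iter f k n v) (iter f k n v') / dist v v')
        (nhdsWithin v (closure V \ {v})) (nhds (Real.exp (-(BirkhoffSum f φ k v n)))) :=
    fun v hv => chain_tendsto hf hconf hv n hinj
  -- surjectivity onto the closed ball and the inverse map
  have hcbsub : closedBall (iter f k n x) δ ⊆ iter f k n '' closure V := by
    have h1 := closedBall_subset_closure_ball hδ hgeoB
    have h2 : IsClosed (iter f k n '' closure V) :=
      ((isClosed_closure.isCompact).image hFcont).isClosed
    have h3 : ball (iter f k n x) δ ⊆ iter f k n '' closure V := by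
      rw [← hbij.image_eq]
      exact Set.image_mono subset_closure
    exact h1.trans (closure_minimal h3 h2)
  obtain ⟨gbar, hgbar⟩ : ∃ gb : M → M, ∀ w ∈ closedBall (iter f k n x) δ,
      gb w ∈ closure V ∧ iter f k n (gb w) = w := by
    refine ⟨fun w => if hw : ∃ v, v ∈ closure V ∧ iter f k n v = w then hw.choose else x,
      fun w hw => ?_⟩
    have hex : ∃ v, v ∈ closure V ∧ iter f k n v = w := by
      obtain ⟨v, hv, he⟩ := hcbsub hw
      exact ⟨v, hv, he⟩
    simp only [dif_pos hex]
    exact hex.choose_spec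
  intro y hy z hz
  constructor
  -- LOWER BOUND
  · obtain ⟨γ, hγc, hγm, hγ0, hγ1, hγv⟩ := hgeoB _ (hmaps hy) _ (hmaps hz)
    have hay : gbar (iter f k n y) = y := by
      have h1 := hgbar _ (hmaps hy)
      exact hinjF _ h1.1 y hy (by rw [h1.2])
    have haz : gbar (iter f k n z) = z := by
      have h1 := hgbar _ (hmaps hz)
      exact hinjF _ h1.1 z hz (by rw [h1.2])
    have hlower' : dist y z ≤
        Real.exp D * Real.exp S * dist (iter f k n y) (iter f k n z) := by
      have hkey := key_global (γ := γ) (h := gbar)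
        (κ := Real.exp D * Real.exp S) (L := dist (iter f k n y) (iter f k n z))
        (by positivity) dist_nonneg hγv ?_
      · rw [hγ0, hγ1, hay, haz] at hkey
        exact hkey
      intro u hu η hη
      have hw : γ u ∈ closedBall (iter f k n x) δ := hγm hu
      obtain ⟨hvcl, hvF⟩ := hgbar _ hw
      have hSv : Real.exp (BirkhoffSum f φ k (gbar (γ u)) n) < Real.exp D * Real.exp S + η := by
        have habs := hS_est _ hvcl
        rw [abs_le] at habs
        have h2 : Real.exp (BirkhoffSum f φ k (gbar (γ u)) n) ≤ Real.exp D * Real.exp S := by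
          calc Real.exp (BirkhoffSum f φ k (gbar (γ u)) n)
              ≤ Real.exp (D + S) := Real.exp_le_exp.2 (by linarith [habs.2])
            _ = Real.exp D * Real.exp S := Real.exp_add _ _
        linarith
      have hlim := hchain _ hvcl
      have hinv : Filter.Tendsto
          (fun v' => dist (gbar (γ u)) v' /
            dist (iter f k n (gbar (γ u))) (iter f k n v'))
          (nhdsWithin (gbar (γ u)) (closure V \ {gbar (γ u)}))
          (nhds (Real.exp (BirkhoffSum f φ k (gbar (γ u)) n))) := by
        have h1 := hlim.inv₀ (ne_of_gt (Real.exp_pos _))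
        have h2 : (Real.exp (-(BirkhoffSum f φ k (gbar (γ u)) n)))⁻¹ =
            Real.exp (BirkhoffSum f φ k (gbar (γ u)) n) := by
          rw [Real.exp_neg, inv_inv]
        rw [h2] at h1
        exact h1.congr fun v' => inv_div _ _
      have hev1 := hinv.eventually_lt_const hSv
      have hev2 : ∀ᶠ v' in nhdsWithin (gbar (γ u)) (closure V),
          dist (gbar (γ u)) v' ≤ (Real.exp D * Real.exp S + η) *
            dist (iter f k n (gbar (γ u))) (iter f k n v') := by
        refine eventually_nhdsWithin_of_diff ?_ (by simp [dist_self])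
        filter_upwards [hev1, self_mem_nhdsWithin] with v' h1 h2
        by_cases hz0 : dist (iter f k n (gbar (γ u))) (iter f k n v') = 0
        · have h3 := hlow _ hvcl v' h2.1
          rw [hz0, mul_zero] at h3 ⊢
          linarith
        · have hpos : 0 < dist (iter f k n (gbar (γ u))) (iter f k n v') :=
            lt_of_le_of_ne dist_nonneg (Ne.symm hz0)
          exact le_of_lt ((div_lt_iff₀ hpos).1 h1)
      have hgtend : Filter.Tendsto gbar (nhdsWithin (γ u) (closedBall (iter f k n x) δ))
          (nhdsWithin (gbar (γ u)) (closure V)) := by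
        rw [Metric.tendsto_nhdsWithin_nhdsWithin]
        intro ε' hε'
        refine ⟨ε', hε', fun w' hw' hd => ⟨(hgbar w' hw').1, ?_⟩⟩
        have h1 := hlow _ (hgbar w' hw').1 _ hvcl
        rw [(hgbar w' hw').2, hvF] at h1
        have hlam_n : lam ^ n ≤ 1 := pow_le_one₀ hlam0.le hlam1.le
        have hdn : (0:ℝ) ≤ dist w' (γ u) := dist_nonneg
        calc dist (gbar w') (gbar (γ u)) ≤ lam ^ n * dist w' (γ u) := h1
          _ ≤ dist w' (γ u) := by nlinarith
          _ < ε' := hd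
      have hγt : Filter.Tendsto γ (nhdsWithin u (Set.Icc 0 1))
          (nhdsWithin (γ u) (closedBall (iter f k n x) δ)) :=
        (hγc u hu).tendsto_nhdsWithin hγm
      filter_upwards [(hgtend.comp hγt).eventually hev2, self_mem_nhdsWithin] with s hs1 hs2
      have hws : γ s ∈ closedBall (iter f k n x) δ := hγm hs2
      have hs1' := hs1
      simp only [Function.comp] at hs1'
      rw [hvF, (hgbar _ hws).2] at hs1'
      calc dist (gbar (γ s)) (gbar (γ u)) = dist (gbar (γ u)) (gbar (γ s)) := dist_comm _ _
        _ ≤ (Real.exp D * Real.exp S + η) * dist (γ u) (γ s) := hs1'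
        _ = (Real.exp D * Real.exp S + η) * dist (γ s) (γ u) := by rw [dist_comm]
    have hpos : (0:ℝ) < Real.exp D * Real.exp S := by positivity
    calc (Real.exp D)⁻¹ * Real.exp (-S) * dist y z
        ≤ (Real.exp D)⁻¹ * Real.exp (-S) *
            (Real.exp D * Real.exp S * dist (iter f k n y) (iter f k n z)) := by
          apply mul_le_mul_of_nonneg_left hlower' (by positivity)
      _ = dist (iter f k n y) (iter f k n z) := by
          rw [Real.exp_neg]
          field_simp
  -- UPPER BOUND
  · obtain ⟨γ, hγc, hγm, hγ0, hγ1, hγv⟩ := hgeoV y hy z hz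
    have hkey := key_global (γ := γ) (h := iter f k n)
      (κ := Real.exp D * Real.exp (-S)) (L := dist y z)
      (by positivity) dist_nonneg hγv ?_
    · rw [hγ0, hγ1] at hkey
      exact hkey
    intro u hu η hη
    have hvm : γ u ∈ closure V := hγm hu
    have hlim := hchain (γ u) hvm
    have hlt : Real.exp (-(BirkhoffSum f φ k (γ u) n)) < Real.exp D * Real.exp (-S) + η := by
      have habs := hS_est (γ u) hvm
      rw [abs_le] at habs
      have h2 : Real.exp (-(BirkhoffSum f φ k (γ u) n)) ≤ Real.exp D * Real.exp (-S) := by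
        calc Real.exp (-(BirkhoffSum f φ k (γ u) n))
            ≤ Real.exp (D + -S) := Real.exp_le_exp.2 (by linarith [habs.1])
          _ = Real.exp D * Real.exp (-S) := Real.exp_add _ _
      linarith
    have hev1 := hlim.eventually_lt_const hlt
    have hev2 : ∀ᶠ v' in nhdsWithin (γ u) (closure V),
        dist (iter f k n (γ u)) (iter f k n v') ≤
          (Real.exp D * Real.exp (-S) + η) * dist (γ u) v' := by
      refine eventually_nhdsWithin_of_diff ?_ (by simp [dist_self])
      filter_upwards [hev1, self_mem_nhdsWithin] with v' h1 h2
      have hpos : 0 < dist (γ u) v' :=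
        dist_pos.2 fun hc => h2.2 (Set.mem_singleton_iff.2 hc.symm)
      exact le_of_lt ((div_lt_iff₀ hpos).1 h1)
    have hγt : Filter.Tendsto γ (nhdsWithin u (Set.Icc 0 1))
        (nhdsWithin (γ u) (closure V)) := (hγc u hu).tendsto_nhdsWithin hγm
    filter_upwards [hγt.eventually hev2] with s hs
    calc dist (iter f k n (γ s)) (iter f k n (γ u))
        = dist (iter f k n (γ u)) (iter f k n (γ s)) := dist_comm _ _
      _ ≤ (Real.exp D * Real.exp (-S) + η) * dist (γ u) (γ s) := hs
      _ = (Real.exp D * Real.exp (-S) + η) * dist (γ s) (γ u) := by rw [dist_comm]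
end
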